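/- arXiv:1703.00659 — 2 statements merged into one kernel-verified Lean document; each statement's English description precedes it below -/
import Mathlib

section
/- Single consuming queue machines faithfully simulate queue machines: for every queue machine M with encoding E(M) and input x, (s, x$) →*_M (q, γ) implies there is a configuration (q', γ') of E(M) with (s, x$) →*_{E(M)} (q', γ') and erase(q', γ') = (q, γ), where erase removes all occurrences of the fresh symbol # from the queue and unprimes the state. -/
structure QM (Q Γ : Type) where
  delta : Q → Γ → Q × List Γ

def QStep {Q Γ : Type} (M : QM Q Γ) (c c' : Q × List Γ) : Prop :=
  ∃ (A : Γ) (α : List Γ), c.2 = A :: α ∧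
    c' = ((M.delta c.1 A).1, α ++ (M.delta c.1 A).2)

def QSteps {Q Γ : Type} (M : QM Q Γ) : (Q × List Γ) → (Q × List Γ) → Prop :=
  Relation.ReflTransGen (QStep M)

def SingleConsuming {Q Γ : Type} (M : QM Q Γ) : Prop :=
  ∀ q a q', M.delta q a = (q', []) → ¬ ∃ b q'', M.delta q' b = (q'', [])

def encodeSC {Q Γ : Type} [DecidableEq Γ] (M : QM Q Γ) : QM (Q ⊕ Q) (Option Γ) where
  delta
    | Sum.inl q, some a =>
        if (M.delta q a).2 = [] then (Sum.inr (M.delta q a).1, [])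
        else (Sum.inl (M.delta q a).1, (M.delta q a).2.map some)
    | Sum.inl q, none => (Sum.inr q, [])
    | Sum.inr q, some a =>
        if (M.delta q a).2 = [] then (Sum.inl (M.delta q a).1, [none])
        else (Sum.inl (M.delta q a).1, (M.delta q a).2.map some)
    | Sum.inr q, none => (Sum.inl q, [none])

def eraseConf {Q Γ : Type} (c : (Q ⊕ Q) × List (Option Γ)) : Q × List Γ :=
  (Sum.elim id id c.1, c.2.filterMap id)

lemma split_lead {Γ : Type} : ∀ (l : List (Option Γ)) (A : Γ) (α : List Γ),
    l.filterMap id = A :: α → ∃ k β, l = List.replicate k none ++ some A :: β ∧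
      β.filterMap id = α := by
  intro l
  induction l with
  | nil => simp
  | cons h t ih =>
    intro A α hl
    cases h with
    | none =>
      simp at hl
      obtain ⟨k, β, h1, h2⟩ := ih A α hl
      exact ⟨k+1, β, by simp [h1, List.replicate_succ], h2⟩
    | some a =>
      simp at hl
      exact ⟨0, t, by simp [hl.1], hl.2⟩

lemma sim_step {Q Γ : Type} [DecidableEq Γ] (M : QM Q Γ) :
    ∀ (k : ℕ) (z : Q ⊕ Q) (A : Γ) (β : List (Option Γ)),
    ∃ c'', QSteps (encodeSC M) (z, List.replicate k none ++ some A :: β) c'' ∧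
      eraseConf c'' = ((M.delta (Sum.elim id id z) A).1,
        β.filterMap id ++ (M.delta (Sum.elim id id z) A).2) := by
  intro k
  induction k with
  | zero =>
    intro z A β
    cases z with
    | inl q =>
      by_cases he : (M.delta q A).2 = []
      · refine ⟨(Sum.inr (M.delta q A).1, β), Relation.ReflTransGen.single
          ⟨some A, β, rfl, ?_⟩, by simp [eraseConf, he]⟩
        simp [encodeSC, he]
      · refine ⟨(Sum.inl (M.delta q A).1, β ++ (M.delta q A).2.map some),
          Relation.ReflTransGen.single ⟨some A, β, rfl, ?_⟩, ?_⟩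
        · simp [encodeSC, he]
        · simp [eraseConf, List.filterMap_append, List.filterMap_map]
    | inr q =>
      by_cases he : (M.delta q A).2 = []
      · refine ⟨(Sum.inl (M.delta q A).1, β ++ [none]), Relation.ReflTransGen.single
          ⟨some A, β, rfl, ?_⟩, by simp [eraseConf, List.filterMap_append, he]⟩
        simp [encodeSC, he]
      · refine ⟨(Sum.inl (M.delta q A).1, β ++ (M.delta q A).2.map some),
          Relation.ReflTransGen.single ⟨some A, β, rfl, ?_⟩, ?_⟩
        · simp [encodeSC, he]
        · simp [eraseConf, List.filterMap_append, List.filterMap_map]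
  | succ k ih =>
    intro z A β
    cases z with
    | inl q =>
      obtain ⟨c'', hs, he⟩ := ih (Sum.inr q) A β
      refine ⟨c'', Relation.ReflTransGen.head
        ⟨none, List.replicate k none ++ some A :: β, by simp [List.replicate_succ], ?_⟩ hs, he⟩
      simp [encodeSC]
    | inr q =>
      obtain ⟨c'', hs, he⟩ := ih (Sum.inl q) A (β ++ [none])
      refine ⟨c'', Relation.ReflTransGen.head
        ⟨none, List.replicate k none ++ some A :: β, by simp [List.replicate_succ], ?_⟩ hs, ?_⟩
      · simp [encodeSC]
      · simpa [List.filterMap_append] using he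

/-- `E(M)` simulates `M`: every run `(s, x$) →*_M (q, γ)` is
mirrored by a run of `E(M)` reaching a configuration that erases to `(q, γ)`. -/
theorem encodeSC_simulates {Q Γ : Type} [DecidableEq Γ] (M : QM Q Γ)
    (s : Q) (x : List Γ) (dollar : Γ) (q : Q) (γ : List Γ)
    (h : QSteps M (s, x ++ [dollar]) (q, γ)) :
    ∃ c', QSteps (encodeSC M) (Sum.inl s, (x ++ [dollar]).map some) c' ∧
      eraseConf c' = (q, γ) := by
  set c₀ : Q × List Γ := (s, x ++ [dollar]) with hc0
  have : ∀ cend : Q × List Γ, QSteps M c₀ cend →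
      ∃ c', QSteps (encodeSC M) (Sum.inl s, (x ++ [dollar]).map some) c' ∧
        eraseConf c' = cend := by
    intro cend hsteps
    induction hsteps with
    | refl =>
      exact ⟨(Sum.inl s, (x ++ [dollar]).map some), Relation.ReflTransGen.refl,
        by simp [eraseConf, List.filterMap_map, hc0]⟩
    | tail hab hbc ih =>
      obtain ⟨c', hs, he⟩ := ih
      obtain ⟨A, α, hq, hc⟩ := hbc
      obtain ⟨z, l⟩ := c'
      have he1 : Sum.elim id id z = _ := congrArg Prod.fst he
      have he2 : List.filterMap id l = _ := congrArg Prod.snd he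
      obtain ⟨k, β, hl, hβ⟩ := split_lead l A α (by rw [he2, hq])
      obtain ⟨c'', hs2, he3⟩ := sim_step M k z A β
      refine ⟨c'', hs.trans (hl ▸ hs2), ?_⟩
      rw [he3, hc, he1, hβ]
  exact this (q, γ) h
end

section
/- The single consuming encoding is sound: for every queue machine M and input x, if (s, x$) →*_{E(M)} (q, γ) then (s, x$) →*_M erase(q, γ). Consequently M terminates on x if and only if E(M) terminates on x. -/
section Aux
variable {Q Γ : Type} [DecidableEq Γ] (M : QM Q Γ)

lemma filterMap_replicate_none (k : ℕ) :
    (List.replicate k (none : Option Γ)).filterMap id = [] := by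
  induction k with
  | zero => rfl
  | succ n ih => simp [List.replicate_succ, List.filterMap_cons, ih]

lemma filterMap_map_some (l : List Γ) : (l.map some).filterMap id = l := by
  induction l with
  | nil => rfl
  | cons a t ih => simp [List.filterMap_cons, ih]

lemma erase_step {c c' : (Q ⊕ Q) × List (Option Γ)}
    (h : QStep (encodeSC M) c c') :
    eraseConf c' = eraseConf c ∨ QStep M (eraseConf c) (eraseConf c') := by
  obtain ⟨A, α, hc, hc'⟩ := h
  obtain ⟨p, κ⟩ := c
  simp only at hc
  subst hc
  match p, A with
  | Sum.inl q, none =>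
      left
      simp [hc', encodeSC, eraseConf, List.filterMap_cons]
  | Sum.inr q, none =>
      left
      simp [hc', encodeSC, eraseConf, List.filterMap_cons]
  | Sum.inl q, some a =>
      right
      refine ⟨a, α.filterMap id, by simp [eraseConf, List.filterMap_cons], ?_⟩
      by_cases hγ : (M.delta q a).2 = []
      · simp [hc', encodeSC, hγ, eraseConf]
      · simp [hc', encodeSC, hγ, eraseConf, List.filterMap_append, filterMap_map_some]
  | Sum.inr q, some a =>
      right
      refine ⟨a, α.filterMap id, by simp [eraseConf, List.filterMap_cons], ?_⟩
      by_cases hγ : (M.delta q a).2 = []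
      · simp [hc', encodeSC, hγ, eraseConf, List.filterMap_append]
      · simp [hc', encodeSC, hγ, eraseConf, List.filterMap_append, filterMap_map_some]

lemma erase_steps {c c' : (Q ⊕ Q) × List (Option Γ)}
    (h : Relation.ReflTransGen (QStep (encodeSC M)) c c') :
    QSteps M (eraseConf c) (eraseConf c') := by
  induction h with
  | refl => exact Relation.ReflTransGen.refl
  | tail _ hstep ih =>
      rcases erase_step M hstep with heq | hst
      · rwa [heq]
      · exact Relation.ReflTransGen.tail ih hst

lemma lead : ∀ (j : ℕ) (p : Q ⊕ Q) (rest : List (Option Γ)),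
    ∃ (p' : Q ⊕ Q) (k : ℕ), Sum.elim id id p' = Sum.elim id id p ∧
      QSteps (encodeSC M) (p, List.replicate j none ++ rest)
        (p', rest ++ List.replicate k none) := by
  intro j
  induction j with
  | zero =>
      intro p rest
      refine ⟨p, 0, rfl, ?_⟩
      simp only [List.replicate, List.nil_append, List.append_nil]
      exact Relation.ReflTransGen.refl
  | succ n ih =>
      intro p rest
      match p with
      | Sum.inl q =>
          obtain ⟨p', k, hp, hs⟩ := ih (Sum.inr q) rest
          refine ⟨p', k, hp,
            Relation.ReflTransGen.head (b := (Sum.inr q, List.replicate n none ++ rest)) ?_ hs⟩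
          exact ⟨none, List.replicate n none ++ rest,
            by simp [List.replicate_succ], by simp [encodeSC]⟩
      | Sum.inr q =>
          obtain ⟨p', k, hp, hs⟩ := ih (Sum.inl q) (rest ++ [none])
          have hs' : QSteps (encodeSC M)
              (Sum.inl q, List.replicate n none ++ (rest ++ [none]))
              (p', rest ++ List.replicate (k + 1) none) := by
            have : rest ++ [none] ++ List.replicate k (none : Option Γ)
                = rest ++ List.replicate (k + 1) none := by
              rw [List.append_assoc, List.singleton_append, ← List.replicate_succ]
            rwa [this] at hs
          refine ⟨p', k + 1, hp,
            Relation.ReflTransGen.head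
              (b := (Sum.inl q, List.replicate n none ++ (rest ++ [none]))) ?_ hs'⟩
          exact ⟨none, List.replicate n none ++ rest,
            by simp [List.replicate_succ], by simp [encodeSC]⟩

lemma decompose : ∀ (κ : List (Option Γ)) (A : Γ) (α : List Γ),
    κ.filterMap id = A :: α →
    ∃ j tail, κ = List.replicate j none ++ some A :: tail ∧ tail.filterMap id = α := by
  intro κ
  induction κ with
  | nil => intro A α h; simp at h
  | cons b t ih =>
      intro A α h
      match b with
      | none =>
          simp only [List.filterMap_cons, id] at h
          obtain ⟨j, tail, h1, h2⟩ := ih A α h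
          exact ⟨j + 1, tail, by simp [List.replicate_succ, h1], h2⟩
      | some a =>
          simp only [List.filterMap_cons, id] at h
          rw [List.cons.injEq] at h
          obtain ⟨rfl, h2⟩ := h
          exact ⟨0, t, by simp, h2⟩

lemma step_sim (p : Q ⊕ Q) (κ : List (Option Γ)) (A : Γ) (α : List Γ)
    (h : κ.filterMap id = A :: α) :
    ∃ d, QSteps (encodeSC M) (p, κ) d ∧
      eraseConf d = ((M.delta (Sum.elim id id p) A).1,
        α ++ (M.delta (Sum.elim id id p) A).2) := by
  obtain ⟨j, tail, rfl, htail⟩ := decompose κ A α h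
  obtain ⟨p', k, hp, hs⟩ := lead M j p (some A :: tail)
  rw [← hp]
  refine ⟨(((encodeSC M).delta p' (some A)).1,
      (tail ++ List.replicate k none) ++ ((encodeSC M).delta p' (some A)).2),
    Relation.ReflTransGen.tail hs ⟨some A, tail ++ List.replicate k none, by simp, rfl⟩, ?_⟩
  match p' with
  | Sum.inl q =>
      by_cases hγ : (M.delta q A).2 = []
      · simp [encodeSC, hγ, eraseConf, List.filterMap_append, filterMap_replicate_none, htail]; exact htail
      · simp [encodeSC, hγ, eraseConf, List.filterMap_append, filterMap_replicate_none,
          filterMap_map_some, htail]; exact htail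
  | Sum.inr q =>
      by_cases hγ : (M.delta q A).2 = []
      · simp [encodeSC, hγ, eraseConf, List.filterMap_append, filterMap_replicate_none, htail]; exact htail
      · simp [encodeSC, hγ, eraseConf, List.filterMap_append, filterMap_replicate_none,
          filterMap_map_some, htail]; exact htail

lemma sim_all (s : Q) (x : List Γ) :
    ∀ c, QSteps M (s, x) c →
      ∃ d, QSteps (encodeSC M) (Sum.inl s, x.map some) d ∧ eraseConf d = c := by
  intro c h
  induction h with
  | refl => exact ⟨_, Relation.ReflTransGen.refl, by simp [eraseConf, filterMap_map_some]⟩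
  | tail _ hstep ih =>
      obtain ⟨d, hd, he⟩ := ih
      obtain ⟨p, κ⟩ := d
      subst he
      obtain ⟨A, α, h1, h2⟩ := hstep
      simp only [eraseConf] at h1 h2
      obtain ⟨d', hd', he'⟩ := step_sim M p κ A α h1
      exact ⟨d', Relation.ReflTransGen.trans hd hd', by rw [he', h2]⟩

lemma all_none_of_filterMap_nil : ∀ (κ : List (Option Γ)),
    κ.filterMap id = [] → κ = List.replicate κ.length none := by
  intro κ
  induction κ with
  | nil => intro _; rfl
  | cons b t ih =>
      intro h
      match b with
      | some a => simp [List.filterMap_cons] at h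
      | none =>
          simp only [List.filterMap_cons, id] at h
          rw [List.length_cons, List.replicate_succ]
          exact congrArg (List.cons none) (ih h)

lemma drain : ∀ (j : ℕ) (p : Q ⊕ Q),
    ∃ p', QSteps (encodeSC M) (p, List.replicate j none) (p', []) := by
  intro j
  induction j with
  | zero => exact fun p => ⟨p, Relation.ReflTransGen.refl⟩
  | succ n ih =>
      intro p
      match p with
      | Sum.inl q =>
          obtain ⟨p', hs⟩ := ih (Sum.inr q)
          refine ⟨p', Relation.ReflTransGen.head
            (b := (Sum.inr q, List.replicate n none)) ?_ hs⟩
          exact ⟨none, List.replicate n none,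
            by simp [List.replicate_succ], by simp [encodeSC]⟩
      | Sum.inr q =>
          obtain ⟨p', hs⟩ := ih (Sum.inr q)
          refine ⟨p', Relation.ReflTransGen.head
            (b := (Sum.inl q, List.replicate n none ++ [none]))
            ?_ (Relation.ReflTransGen.head (b := (Sum.inr q, List.replicate n none)) ?_ hs)⟩
          · exact ⟨none, List.replicate n none,
              by simp [List.replicate_succ], by simp [encodeSC]⟩
          · refine ⟨none, List.replicate n none, ?_, by simp [encodeSC]⟩
            show List.replicate n (none : Option Γ) ++ [none] = none :: List.replicate n none
            rw [← List.replicate_succ', List.replicate_succ]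

end Aux

/-- soundness of the single consuming encoding: every run of
`E(M)` erases to a run of `M`; consequently `M` terminates on `x` iff `E(M)`
terminates on `x`. -/
theorem encodeSC_sound {Q Γ : Type} [DecidableEq Γ] (M : QM Q Γ)
    (s : Q) (x : List Γ) (dollar : Γ) :
    (∀ c, QSteps (encodeSC M) (Sum.inl s, (x ++ [dollar]).map some) c →
      QSteps M (s, x ++ [dollar]) (eraseConf c)) ∧
    ((∃ q, QSteps M (s, x ++ [dollar]) (q, [])) ↔
      (∃ p, QSteps (encodeSC M) (Sum.inl s, (x ++ [dollar]).map some) (p, []))) := by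

  have part1 : ∀ c, QSteps (encodeSC M) (Sum.inl s, (x ++ [dollar]).map some) c →
      QSteps M (s, x ++ [dollar]) (eraseConf c) := by
    intro c h
    have := erase_steps M h
    simpa [eraseConf, filterMap_map_some] using this
  refine ⟨part1, ?_, ?_⟩
  · rintro ⟨q, hq⟩
    obtain ⟨⟨p, κ⟩, hd, he⟩ := sim_all M s (x ++ [dollar]) (q, []) hq
    have hκ : κ.filterMap id = [] := by
      have := congrArg Prod.snd he
      simpa [eraseConf] using this
    obtain ⟨p', hp'⟩ := drain M κ.length p
    rw [← all_none_of_filterMap_nil κ hκ] at hp'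
    exact ⟨p', Relation.ReflTransGen.trans hd hp'⟩
  · rintro ⟨p, hp⟩
    have := part1 (p, []) hp
    exact ⟨Sum.elim id id p, by simpa [eraseConf] using this⟩
end
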